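/- The approximations alternate around √2: for the side and diameter number sequences and every natural number n, one has d(n) < √2·a(n) if and only if n is even (and d(n) > √2·a(n) if and only if n is odd). -/
import Mathlib


/-- The pair (side number, diameter number) at stage `n`:
`(a 0, d 0) = (1, 1)`, `a (n+1) = a n + d n`, `d (n+1) = 2 * a n + d n`. -/
def sideDiam : ℕ → ℕ × ℕ
  | 0 => (1, 1)
  | n + 1 => ((sideDiam n).1 + (sideDiam n).2, 2 * (sideDiam n).1 + (sideDiam n).2)

/-- The side numbers: `a 0 = 1`, `a (n+1) = a n + d n`. -/
def sideNum (n : ℕ) : ℕ := (sideDiam n).1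

/-- The diameter numbers: `d 0 = 1`, `d (n+1) = 2 * a n + d n`. -/
def diamNum (n : ℕ) : ℕ := (sideDiam n).2

lemma sideNum_pos (n : ℕ) : 0 < sideNum n := by
  induction n with
  | zero => simp [sideNum, sideDiam]
  | succ k ih => simp only [sideNum, sideDiam] at *; omega

lemma key (n : ℕ) :
    (Even n → (diamNum n)^2 + 1 = 2 * (sideNum n)^2) ∧
    (Odd n → (diamNum n)^2 = 2 * (sideNum n)^2 + 1) := by
  induction n with
  | zero => simp [sideNum, diamNum, sideDiam]
  | succ k ih =>
    obtain ⟨h1, h2⟩ := ih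
    rcases Nat.even_or_odd k with h | h
    · have := h1 h
      constructor
      · intro he; rw [Nat.even_add_one] at he; exact absurd h he
      · intro _
        simp only [sideNum, diamNum, sideDiam] at this ⊢
        ring_nf; ring_nf at this; omega
    · have := h2 h
      constructor
      · intro _
        simp only [sideNum, diamNum, sideDiam] at this ⊢
        ring_nf; ring_nf at this; omega
      · intro ho; rw [Nat.odd_iff] at ho h; omega

lemma sq_iff (n : ℕ) :
    ((diamNum n : ℝ) < Real.sqrt 2 * (sideNum n : ℝ) ↔
      (diamNum n)^2 < 2 * (sideNum n)^2) := by
  have ha : (0:ℝ) ≤ (sideNum n : ℝ) := Nat.cast_nonneg _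
  have : Real.sqrt 2 * (sideNum n : ℝ) = Real.sqrt (2 * (sideNum n : ℝ)^2) := by
    rw [Real.sqrt_mul (by norm_num), Real.sqrt_sq ha]
  rw [this, show ((2 : ℝ) * (sideNum n : ℝ)^2) = ((2 * (sideNum n)^2 : ℕ) : ℝ) by push_cast; ring,
    Real.lt_sqrt (Nat.cast_nonneg _)]
  exact_mod_cast Iff.rfl

theorem side_diam_alternate (n : ℕ) :
    ((diamNum n : ℝ) < Real.sqrt 2 * (sideNum n : ℝ) ↔ Even n) ∧
    (Real.sqrt 2 * (sideNum n : ℝ) < (diamNum n : ℝ) ↔ Odd n) := by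
  obtain ⟨h1, h2⟩ := key n
  rcases Nat.even_or_odd n with h | h
  · have := h1 h
    constructor
    · simp only [h, iff_true]
      rw [sq_iff]; omega
    · constructor
      · intro hlt
        exfalso
        have := (sq_iff n).mpr (by omega)
        linarith
      · intro ho; exact absurd h (Nat.not_even_iff_odd.mpr ho)
  · have := h2 h
    have hne : ¬ (diamNum n : ℝ) < Real.sqrt 2 * (sideNum n : ℝ) := by
      rw [sq_iff]; omega
    constructor
    · simp only [hne, false_iff]; exact Nat.not_even_iff_odd.mpr h
    · simp only [h, iff_true]
      rcases lt_or_ge (Real.sqrt 2 * (sideNum n : ℝ)) (diamNum n : ℝ) with h' | h'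
      · exact h'
      · exfalso
        rcases eq_or_lt_of_le h' with heq | hlt
        · have : (2:ℝ) * (sideNum n)^2 = (diamNum n)^2 := by
            have := heq
            have h2' : ((diamNum n:ℝ))^2 = (Real.sqrt 2 * (sideNum n : ℝ))^2 := by rw [← heq]
            rw [mul_pow, Real.sq_sqrt (by norm_num : (0:ℝ) ≤ 2)] at h2'
            · linarith [h2']
          have : (2 * (sideNum n)^2 : ℕ) = (diamNum n)^2 := by exact_mod_cast this
          omega
        · exact hne hlt
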